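/- If A ∈ ℂ^{n×n}, n ≥ 2, is a Nekrasov matrix and B := |D| − |D|(|D|−|L|)⁻¹|U|, then B is strictly diagonally dominant and ‖B⁻¹‖_∞ ≤ 1 / min_i (|a_ii| − h_i(A)). -/
import Mathlib


open Matrix

attribute [local instance] Matrix.linftyOpNormedAddCommGroup

/-- Deleted i-th row sum r_i(A). -/
noncomputable def rowSum {n : ℕ} (A : Matrix (Fin n) (Fin n) ℂ) (i : Fin n) : ℝ :=
  ∑ j ∈ Finset.univ.erase i, ‖A i j‖

/-- Recursive Nekrasov quantities h_i(A). -/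
noncomputable def nekH {n : ℕ} (A : Matrix (Fin n) (Fin n) ℂ) : Fin n → ℝ :=
  fun i =>
    (∑ j : {j : Fin n // j < i}, ‖A i j.1‖ * nekH A j.1 / ‖A j.1 j.1‖) +
      ∑ j ∈ Finset.univ.filter (fun j => i < j), ‖A i j‖
  termination_by i => (i : ℕ)
  decreasing_by exact j.2

/-- Recursive quantities z_i(A). -/
noncomputable def nekZ {n : ℕ} (A : Matrix (Fin n) (Fin n) ℂ) : Fin n → ℝ :=
  fun i => (∑ j : {j : Fin n // j < i}, ‖A i j.1‖ / ‖A j.1 j.1‖ * nekZ A j.1) + 1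
  termination_by i => (i : ℕ)
  decreasing_by exact j.2

/-- |D| : entrywise absolute value of the diagonal part. -/
noncomputable def absD {n : ℕ} (A : Matrix (Fin n) (Fin n) ℂ) : Matrix (Fin n) (Fin n) ℝ :=
  Matrix.of fun i j => if i = j then ‖A i j‖ else 0

/-- |L| : entrywise absolute value of the strictly lower triangular part. -/
noncomputable def absL {n : ℕ} (A : Matrix (Fin n) (Fin n) ℂ) : Matrix (Fin n) (Fin n) ℝ :=
  Matrix.of fun i j => if j < i then ‖A i j‖ else 0

/-- |U| : entrywise absolute value of the strictly upper triangular part. -/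
noncomputable def absU {n : ℕ} (A : Matrix (Fin n) (Fin n) ℂ) : Matrix (Fin n) (Fin n) ℝ :=
  Matrix.of fun i j => if i < j then ‖A i j‖ else 0

/-- Comparison matrix ⟨A⟩. -/
noncomputable def cmpM {n : ℕ} (A : Matrix (Fin n) (Fin n) ℂ) : Matrix (Fin n) (Fin n) ℝ :=
  Matrix.of fun i j => if i = j then ‖A i j‖ else -‖A i j‖

lemma nekH_nonneg {n : ℕ} (A : Matrix (Fin n) (Fin n) ℂ) : ∀ i, 0 ≤ nekH A i := fun i => by
  rw [nekH]
  refine add_nonneg (Finset.sum_nonneg fun j _ => ?_) (Finset.sum_nonneg fun j _ => norm_nonneg _)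
  have := nekH_nonneg A j.1
  positivity
termination_by i => (i : ℕ)
decreasing_by exact j.2

lemma nekH_eq {n : ℕ} (A : Matrix (Fin n) (Fin n) ℂ) (i : Fin n) :
    nekH A i = (∑ j ∈ Finset.univ.filter (· < i), ‖A i j‖ * nekH A j / ‖A j j‖) +
      ∑ j ∈ Finset.univ.filter (fun j => i < j), ‖A i j‖ := by
  rw [nekH]
  congr 1
  exact (Finset.sum_subtype (p := (· < i)) (Finset.univ.filter (· < i)) (fun x => by simp) (fun j => ‖A i j‖ * nekH A j / ‖A j j‖)).symm

section T
variable {n : ℕ} (A : Matrix (Fin n) (Fin n) ℂ)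

lemma d_pos (hNek : ∀ i, nekH A i < ‖A i i‖) (i : Fin n) : 0 < ‖A i i‖ :=
  lt_of_le_of_lt (nekH_nonneg A i) (hNek i)

lemma T_apply (i j : Fin n) : (absD A - absL A) i j =
    if i = j then ‖A i i‖ else if j < i then -‖A i j‖ else 0 := by
  simp only [Matrix.sub_apply, absD, absL, Matrix.of_apply]
  rcases eq_or_ne i j with rfl | h
  · simp
  · simp only [h, if_false, if_neg h, zero_sub]
    rcases lt_or_ge j i with h2 | h2
    · simp [h2]
    · have : ¬ j < i := asymm (lt_of_le_of_ne h2 h); simp [this]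

lemma T_lower : (absD A - absL A).BlockTriangular OrderDual.toDual := by
  intro i j hij
  replace hij : i < j := hij
  rw [T_apply, if_neg hij.ne, if_neg (asymm hij)]

lemma T_det (hNek : ∀ i, nekH A i < ‖A i i‖) : (absD A - absL A).det ≠ 0 := by
  rw [Matrix.det_of_lowerTriangular (absD A - absL A) (T_lower A)]
  exact Finset.prod_ne_zero_iff.mpr fun i _ => by
    rw [T_apply, if_pos rfl]; exact (d_pos A hNek i).ne'

lemma T_mul_inv (hNek : ∀ i, nekH A i < ‖A i i‖) :
    (absD A - absL A) * (absD A - absL A)⁻¹ = 1 :=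
  Matrix.mul_nonsing_inv _ (isUnit_iff_ne_zero.mpr (T_det A hNek))

lemma T_inv_mul (hNek : ∀ i, nekH A i < ‖A i i‖) :
    (absD A - absL A)⁻¹ * (absD A - absL A) = 1 :=
  Matrix.nonsing_inv_mul _ (isUnit_iff_ne_zero.mpr (T_det A hNek))

end T

section S
variable {n : ℕ} (A : Matrix (Fin n) (Fin n) ℂ)

lemma S_rec (hNek : ∀ i, nekH A i < ‖A i i‖) (i j : Fin n) :
    ‖A i i‖ * (absD A - absL A)⁻¹ i j =
      (1 : Matrix (Fin n) (Fin n) ℝ) i j +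
        ∑ k ∈ Finset.univ.filter (· < i), ‖A i k‖ * (absD A - absL A)⁻¹ k j := by
  have h := congrFun (congrFun (T_mul_inv A hNek) i) j
  rw [Matrix.mul_apply, ← Finset.add_sum_erase _ _ (Finset.mem_univ i)] at h
  rw [T_apply, if_pos rfl] at h
  have h2 : ∑ k ∈ Finset.univ.erase i, (absD A - absL A) i k * (absD A - absL A)⁻¹ k j
      = -∑ k ∈ Finset.univ.filter (· < i), ‖A i k‖ * (absD A - absL A)⁻¹ k j := by
    rw [Finset.sum_congr rfl (fun k hk => ?_) , ← Finset.sum_filter (p := (· < i))]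
    · rw [show Finset.filter (· < i) (Finset.univ.erase i) = Finset.univ.filter (· < i) by
        ext k; simp; exact fun h => ne_of_lt h]
      rw [← Finset.sum_neg_distrib]
    · rw [T_apply, if_neg (Finset.ne_of_mem_erase hk).symm]
      rcases lt_or_ge k i with h3 | h3
      · simp [h3, neg_mul]
      · simp [not_lt.mpr h3]
  rw [h2] at h
  linarith

lemma S_nonneg (hNek : ∀ i, nekH A i < ‖A i i‖) : ∀ i j, 0 ≤ (absD A - absL A)⁻¹ i j :=
  fun i j => by
  have h := S_rec A hNek i j
  have h1 : 0 ≤ (1 : Matrix (Fin n) (Fin n) ℝ) i j := by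
    rw [Matrix.one_apply]; positivity
  have h2 : 0 ≤ ∑ k ∈ Finset.univ.filter (· < i), ‖A i k‖ * (absD A - absL A)⁻¹ k j :=
    Finset.sum_nonneg fun k hk => mul_nonneg (norm_nonneg _) (S_nonneg hNek k j)
  nlinarith [d_pos A hNek i]
termination_by i j => (i : ℕ)
decreasing_by exact (Finset.mem_filter.mp hk).2

end S

section C
variable {n : ℕ} (A : Matrix (Fin n) (Fin n) ℂ)

lemma T_mulVec (hNek : ∀ i, nekH A i < ‖A i i‖) :
    (absD A - absL A).mulVec (fun k => nekH A k / ‖A k k‖) =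
      fun i => ∑ j ∈ Finset.univ.filter (fun j => i < j), ‖A i j‖ := by
  funext i
  rw [Matrix.mulVec, dotProduct, ← Finset.add_sum_erase _ _ (Finset.mem_univ i),
    T_apply, if_pos rfl]
  have h2 : ∑ k ∈ Finset.univ.erase i, (absD A - absL A) i k * (nekH A k / ‖A k k‖)
      = -∑ k ∈ Finset.univ.filter (· < i), ‖A i k‖ * nekH A k / ‖A k k‖ := by
    rw [Finset.sum_congr rfl (fun k hk => ?_), ← Finset.sum_filter (p := (· < i))]
    · rw [show Finset.filter (· < i) (Finset.univ.erase i) = Finset.univ.filter (· < i) by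
        ext k; simp; exact fun h => ne_of_lt h]
      rw [← Finset.sum_neg_distrib]
    · rw [T_apply, if_neg (Finset.ne_of_mem_erase hk).symm]
      rcases lt_or_ge k i with h3 | h3
      · simp [h3, neg_mul, mul_div_assoc]
      · simp [not_lt.mpr h3]
  rw [h2, mul_comm, div_mul_cancel₀ _ (d_pos A hNek i).ne']
  have h3 := nekH_eq A i
  linarith

lemma S_mulVec (hNek : ∀ i, nekH A i < ‖A i i‖) :
    (absD A - absL A)⁻¹.mulVec
        (fun i => ∑ j ∈ Finset.univ.filter (fun j => i < j), ‖A i j‖) =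
      fun k => nekH A k / ‖A k k‖ := by
  rw [← T_mulVec A hNek, Matrix.mulVec_mulVec, T_inv_mul A hNek, Matrix.one_mulVec]

lemma absD_mul_apply (M : Matrix (Fin n) (Fin n) ℝ) (i j : Fin n) :
    (absD A * M) i j = ‖A i i‖ * M i j := by
  rw [Matrix.mul_apply, Finset.sum_eq_single i (fun k _ hk => by simp [absD, hk.symm])
    (fun h => absurd (Finset.mem_univ i) h)]
  simp [absD]

lemma C_apply (i j : Fin n) :
    (absD A * (absD A - absL A)⁻¹ * absU A) i j =
      ‖A i i‖ * ∑ k, (absD A - absL A)⁻¹ i k * absU A k j := by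
  rw [mul_assoc, absD_mul_apply, Matrix.mul_apply]

lemma C_nonneg (hNek : ∀ i, nekH A i < ‖A i i‖) (i j : Fin n) :
    0 ≤ (absD A * (absD A - absL A)⁻¹ * absU A) i j := by
  rw [C_apply]
  refine mul_nonneg (norm_nonneg _) (Finset.sum_nonneg fun k _ =>
    mul_nonneg (S_nonneg A hNek i k) ?_)
  simp only [absU, Matrix.of_apply]
  positivity

lemma C_rowsum (hNek : ∀ i, nekH A i < ‖A i i‖) (i : Fin n) :
    ∑ j, (absD A * (absD A - absL A)⁻¹ * absU A) i j = nekH A i := by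
  have key := congrFun (S_mulVec A hNek) i
  rw [Matrix.mulVec, dotProduct] at key
  calc ∑ j, (absD A * (absD A - absL A)⁻¹ * absU A) i j
      = ‖A i i‖ * ∑ k, (absD A - absL A)⁻¹ i k *
          ∑ j ∈ Finset.univ.filter (fun j => k < j), ‖A k j‖ := by
        simp_rw [C_apply]
        rw [← Finset.mul_sum, Finset.sum_comm]
        congr 1
        refine Finset.sum_congr rfl fun k _ => ?_
        rw [← Finset.mul_sum]
        congr 1
        rw [Finset.sum_filter]
        exact Finset.sum_congr rfl fun j _ => by simp [absU]
    _ = ‖A i i‖ * (nekH A i / ‖A i i‖) := by rw [key]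
    _ = nekH A i := by rw [mul_comm, div_mul_cancel₀ _ (d_pos A hNek i).ne']

lemma C_diag_le (hNek : ∀ i, nekH A i < ‖A i i‖) (i : Fin n) :
    (absD A * (absD A - absL A)⁻¹ * absU A) i i ≤ nekH A i := by
  rw [← C_rowsum A hNek i]
  exact Finset.single_le_sum (fun j _ => C_nonneg A hNek i j) (Finset.mem_univ i)

lemma B_sdd (hNek : ∀ i, nekH A i < ‖A i i‖) (i : Fin n) :
    ∑ j ∈ Finset.univ.erase i,
        |(absD A - absD A * (absD A - absL A)⁻¹ * absU A) i j|
      = nekH A i - (absD A * (absD A - absL A)⁻¹ * absU A) i i ∧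
    (absD A - absD A * (absD A - absL A)⁻¹ * absU A) i i
      = ‖A i i‖ - (absD A * (absD A - absL A)⁻¹ * absU A) i i := by
  constructor
  · rw [← C_rowsum A hNek i, ← Finset.add_sum_erase _ _ (Finset.mem_univ i)]
    have : ∀ j ∈ Finset.univ.erase i,
        |(absD A - absD A * (absD A - absL A)⁻¹ * absU A) i j|
          = (absD A * (absD A - absL A)⁻¹ * absU A) i j := by
      intro j hj
      have hij : i ≠ j := (Finset.ne_of_mem_erase hj).symm
      rw [Matrix.sub_apply, show absD A i j = 0 by simp [absD, hij], zero_sub, abs_neg,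
        abs_of_nonneg (C_nonneg A hNek i j)]
    rw [Finset.sum_congr rfl this]
    ring
  · rw [Matrix.sub_apply, show absD A i i = ‖A i i‖ by simp [absD]]

lemma B_sdd' (hNek : ∀ i, nekH A i < ‖A i i‖) (i : Fin n) :
    ∑ j ∈ Finset.univ.erase i,
        |(absD A - absD A * (absD A - absL A)⁻¹ * absU A) i j|
      + (‖A i i‖ - nekH A i)
      = |(absD A - absD A * (absD A - absL A)⁻¹ * absU A) i i| := by
  obtain ⟨h1, h2⟩ := B_sdd A hNek i
  have h3 : (absD A * (absD A - absL A)⁻¹ * absU A) i i ≤ nekH A i := C_diag_le A hNek i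
  rw [h1, h2, abs_of_pos (by linarith [hNek i])]
  ring

lemma B_sdd_strict (hNek : ∀ i, nekH A i < ‖A i i‖) (i : Fin n) :
    ∑ j ∈ Finset.univ.erase i,
        |(absD A - absD A * (absD A - absL A)⁻¹ * absU A) i j|
      < |(absD A - absD A * (absD A - absL A)⁻¹ * absU A) i i| := by
  have := B_sdd' A hNek i
  linarith [hNek i]

lemma B_mulVec_lower [Nonempty (Fin n)] (hNek : ∀ i, nekH A i < ‖A i i‖) (x : Fin n → ℝ) :
    (⨅ i, (‖A i i‖ - nekH A i)) * ‖x‖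
      ≤ ‖(absD A - absD A * (absD A - absL A)⁻¹ * absU A).mulVec x‖ := by
  set B := absD A - absD A * (absD A - absL A)⁻¹ * absU A with hB
  set α := ⨅ i, (‖A i i‖ - nekH A i) with hα
  obtain ⟨i, hi⟩ := Finite.exists_max fun i => |x i|
  have hxn : ‖x‖ = |x i| := by
    refine le_antisymm ?_ ?_
    · exact pi_norm_le_iff_of_nonneg (abs_nonneg _) |>.mpr fun j => by
        rw [Real.norm_eq_abs]; exact hi j
    · rw [← Real.norm_eq_abs]; exact norm_le_pi_norm x i
  have hBx : (B.mulVec x) i = B i i * x i + ∑ j ∈ Finset.univ.erase i, B i j * x j := by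
    rw [Matrix.mulVec, dotProduct, ← Finset.add_sum_erase _ _ (Finset.mem_univ i)]
  have hsum : |∑ j ∈ Finset.univ.erase i, B i j * x j|
      ≤ (∑ j ∈ Finset.univ.erase i, |B i j|) * |x i| := by
    refine (Finset.abs_sum_le_sum_abs _ _).trans ?_
    rw [Finset.sum_mul]
    exact Finset.sum_le_sum fun j _ => by
      rw [abs_mul]; exact mul_le_mul_of_nonneg_left (hi j) (abs_nonneg _)
  have key : α * |x i| ≤ |(B.mulVec x) i| := by
    have hα_le : α ≤ ‖A i i‖ - nekH A i :=
      ciInf_le (Finite.bddBelow_range _) i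
    have h1 := B_sdd' A hNek i
    have tri : |B i i * x i| - |∑ j ∈ Finset.univ.erase i, B i j * x j| ≤ |(B.mulVec x) i| := by
      rw [hBx]
      have h4 := abs_sub_abs_le_abs_sub (B i i * x i)
        (-(∑ j ∈ Finset.univ.erase i, B i j * x j))
      rwa [abs_neg, sub_neg_eq_add] at h4
    rw [abs_mul] at tri
    nlinarith [abs_nonneg (x i), abs_nonneg (∑ j ∈ Finset.univ.erase i, B i j * x j)]
  calc α * ‖x‖ = α * |x i| := by rw [hxn]
    _ ≤ |(B.mulVec x) i| := key
    _ ≤ ‖B.mulVec x‖ := by rw [← Real.norm_eq_abs]; exact norm_le_pi_norm _ i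

end C

/-- For a Nekrasov matrix, B := |D| − |D|(|D|−|L|)⁻¹|U| is SDD and
    ‖B⁻¹‖_∞ ≤ 1 / min_i (|a_ii| − h_i(A)). -/
theorem stmt7 {n : ℕ} (hn : 2 ≤ n) (A : Matrix (Fin n) (Fin n) ℂ)
    (hNek : ∀ i, nekH A i < ‖A i i‖) :
    (∀ i, ∑ j ∈ Finset.univ.erase i, |(absD A - absD A * (absD A - absL A)⁻¹ * absU A) i j|
        < |(absD A - absD A * (absD A - absL A)⁻¹ * absU A) i i|) ∧
    ‖(absD A - absD A * (absD A - absL A)⁻¹ * absU A)⁻¹‖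
      ≤ 1 / ⨅ i, (‖A i i‖ - nekH A i) := by
  haveI hne : Nonempty (Fin n) := ⟨⟨0, by omega⟩⟩
  refine ⟨B_sdd_strict A hNek, ?_⟩
  set α := ⨅ i, (‖A i i‖ - nekH A i) with hα
  have hαpos : 0 < α := by
    obtain ⟨m, hm⟩ := Finite.exists_min fun i => ‖A i i‖ - nekH A i
    have h := le_ciInf hm
    rw [← hα] at h
    linarith [hNek m]
  have hdet : (absD A - absD A * (absD A - absL A)⁻¹ * absU A).det ≠ 0 := by
    apply det_ne_zero_of_sum_row_lt_diag
    intro k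
    simpa [Real.norm_eq_abs] using B_sdd_strict A hNek k
  set B := absD A - absD A * (absD A - absL A)⁻¹ * absU A with hB
  have hBB : B * B⁻¹ = 1 := Matrix.mul_nonsing_inv _ (isUnit_iff_ne_zero.mpr hdet)
  have hrow : ∀ i, ∑ j, ‖B⁻¹ i j‖ ≤ 1 / α := by
    intro i
    set s : Fin n → ℝ := fun j => if 0 ≤ B⁻¹ i j then (1 : ℝ) else -1 with hs
    have hnorm_s : ‖s‖ ≤ 1 := pi_norm_le_iff_of_nonneg zero_le_one |>.mpr fun j => by
      simp only [hs]
      by_cases h : 0 ≤ B⁻¹ i j <;> simp [h]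
    have heq : (B⁻¹.mulVec s) i = ∑ j, ‖B⁻¹ i j‖ := by
      rw [Matrix.mulVec, dotProduct]
      refine Finset.sum_congr rfl fun j _ => ?_
      simp only [hs, Real.norm_eq_abs]
      by_cases h : 0 ≤ B⁻¹ i j
      · simp [h, abs_of_nonneg h]
      · simp [h, abs_of_neg (lt_of_not_ge h)]
    have h1 : α * ‖B⁻¹.mulVec s‖ ≤ 1 := by
      have h0 := B_mulVec_lower A hNek (B⁻¹.mulVec s)
      rw [Matrix.mulVec_mulVec, hBB, Matrix.one_mulVec] at h0
      calc α * ‖B⁻¹.mulVec s‖ ≤ ‖s‖ := h0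
        _ ≤ 1 := hnorm_s
    have h2 : ∑ j, ‖B⁻¹ i j‖ ≤ ‖B⁻¹.mulVec s‖ := by
      rw [← heq]
      calc (B⁻¹.mulVec s) i ≤ |(B⁻¹.mulVec s) i| := le_abs_self _
        _ ≤ ‖B⁻¹.mulVec s‖ := by rw [← Real.norm_eq_abs]; exact norm_le_pi_norm _ i
    have h3 : ‖B⁻¹.mulVec s‖ ≤ 1 / α := (le_div_iff₀ hαpos).mpr (by linarith)
    linarith
  rw [Matrix.linfty_opNorm_def]
  obtain ⟨i0, _, hi0⟩ := Finset.exists_mem_eq_sup Finset.univ Finset.univ_nonempty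
    (fun i => ∑ j, ‖B⁻¹ i j‖₊)
  rw [hi0]
  calc ((∑ j, ‖B⁻¹ i0 j‖₊ : NNReal) : ℝ) = ∑ j, ‖B⁻¹ i0 j‖ := by
        push_cast; rfl
    _ ≤ 1 / α := hrow i0
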